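/- Let α be the assignment sending x, y, z to 0 in both A_n and A_m (n < m). Then: (1) the map δ with δ({min,max}) = n and δ(p) = 0 for all other pairs p ∈ P_2({min,max,x,y,z}) is a separator for ⟨{(A_n,α)}, {(A_m,α)}⟩, with w(δ) = √n; and (2) every separator for ⟨{(A_n,α)}, {(A_m,α)}⟩ has weight at least √n; hence δ is a minimal separator for this pair. -/
import Mathlib


/-- The five "positions" `{min, max, x, y, z}` used by separators. -/
inductive SVar : Type
  | vmin | vmax | vx | vy | vz
deriving DecidableEq

/-- An interpretation `(𝒜, α)`: a linear order `A_n` (on the integers `{0, …, n}`) together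
with an assignment of the three variables `x, y, z`. -/
structure Interp : Type where
  n : ℕ
  a : Fin 3 → Fin (n + 1)

/-- The integer value of each of `min, max, x, y, z` under an interpretation. -/
def Interp.val (I : Interp) : SVar → ℤ
  | .vmin => 0
  | .vmax => I.n
  | .vx => I.a 0
  | .vy => I.a 1
  | .vz => I.a 2

/-- The distance `d(a, b) = |a − b|` between the values of two positions. -/
def Interp.dist (I : Interp) (u u' : SVar) : ℕ := (I.val u - I.val u').natAbs

/-- `δ` separates the pair of interpretations `⟨I, J⟩`: there are distinct
`u, u' ∈ {min, max, x, y, z}` such that either the `<`-types differ, or both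
`MIN[d_I(u,u'), d_J(u,u')] ≤ δ({u,u'})` and `d_I(u,u') ≠ d_J(u,u')`. -/
def Separates (δ : Finset SVar → ℕ) (I J : Interp) : Prop :=
  ∃ u u' : SVar, u ≠ u' ∧
    (compare (I.val u) (I.val u') ≠ compare (J.val u) (J.val u') ∨
      (min (I.dist u u') (J.dist u u') ≤ δ {u, u'} ∧ I.dist u u' ≠ J.dist u u'))

/-- `δ : P₂({min,max,x,y,z}) → ℕ` is a separator for `⟨A, B⟩`. -/
def IsSeparator (δ : Finset SVar → ℕ) (A B : Set Interp) : Prop :=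
  ∀ I ∈ A, ∀ J ∈ B, Separates δ I J

/-- The border-distance
`b(δ) = MAX {δ({min,max}), δ({min,u}) + δ({u',max}) : u, u' ∈ {x,y,z}}`. -/
def borderDist (δ : Finset SVar → ℕ) : ℕ :=
  max (δ {SVar.vmin, SVar.vmax})
    ((({SVar.vx, SVar.vy, SVar.vz} : Finset SVar) ×ˢ
        ({SVar.vx, SVar.vy, SVar.vz} : Finset SVar)).sup
      fun p => δ {SVar.vmin, p.1} + δ {p.2, SVar.vmax})

/-- The centre-distance `c(δ) = MAX {δ(p) + δ(q) : p ≠ q ∈ P₂({x,y,z})}`. -/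
def centreDist (δ : Finset SVar → ℕ) : ℕ :=
  max (δ {SVar.vx, SVar.vy} + δ {SVar.vx, SVar.vz})
    (max (δ {SVar.vx, SVar.vy} + δ {SVar.vy, SVar.vz})
      (δ {SVar.vx, SVar.vz} + δ {SVar.vy, SVar.vz}))

/-- The weight `w(δ) = √(c(δ)² + b(δ))`. -/
noncomputable def sepWeight (δ : Finset SVar → ℕ) : ℝ :=
  Real.sqrt ((centreDist δ : ℝ) ^ 2 + (borderDist δ : ℝ))

/-- A minimal separator for `⟨A, B⟩`: a separator of minimal weight. -/
def IsMinimalSeparator (δ : Finset SVar → ℕ) (A B : Set Interp) : Prop :=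
  IsSeparator δ A B ∧ ∀ δ' : Finset SVar → ℕ, IsSeparator δ' A B → sepWeight δ ≤ sepWeight δ'

section
open SVar

private lemma val_eq (k : ℕ) (u : SVar) :
    (⟨k, fun _ => 0⟩ : Interp).val u = if u = .vmax then (k:ℤ) else 0 := by
  cases u <;> simp [Interp.val]

private lemma dist_eq (k : ℕ) (u u' : SVar) :
    (⟨k, fun _ => 0⟩ : Interp).dist u u' =
      if u = .vmax then (if u' = .vmax then 0 else k) else (if u' = .vmax then k else 0) := by
  cases u <;> cases u' <;> simp [Interp.dist, Interp.val]

private lemma bd_min (δ : Finset SVar → ℕ) : δ {vmin, vmax} ≤ borderDist δ := le_max_left _ _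

private lemma bd_var (δ : Finset SVar → ℕ) (v : SVar) (hv : v ∈ ({vx, vy, vz} : Finset SVar)) :
    δ {v, vmax} ≤ borderDist δ := by
  refine le_max_of_le_right ?_
  refine le_trans (Nat.le_add_left _ (δ {vmin, v})) ?_
  exact Finset.le_sup (f := fun p => δ {vmin, p.1} + δ {p.2, vmax}) (b := (v, v)) (Finset.mem_product.mpr ⟨hv, hv⟩)

private lemma lower_bound (n m : ℕ) (hn : 0 < n) (hnm : n < m) (δ : Finset SVar → ℕ)
    (h : Separates δ ⟨n, fun _ => 0⟩ ⟨m, fun _ => 0⟩) : n ≤ borderDist δ := by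
  have hm : 0 < m := hn.trans hnm
  obtain ⟨u, u', hne, hcmp | ⟨hmin, hd⟩⟩ := h
  · exfalso
    apply hcmp
    rw [val_eq, val_eq, val_eq, val_eq]
    rcases eq_or_ne u vmax with rfl | hu
    · rcases eq_or_ne u' vmax with rfl | hu'
      · exact absurd rfl hne
      · rw [if_pos rfl, if_pos rfl, if_neg hu', if_neg hu',
          compare_gt_iff_gt.mpr (by exact_mod_cast hn),
          compare_gt_iff_gt.mpr (by exact_mod_cast hm)]
    · rcases eq_or_ne u' vmax with rfl | hu'
      · rw [if_neg hu, if_neg hu, if_pos rfl, if_pos rfl,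
          compare_lt_iff_lt.mpr (by exact_mod_cast hn),
          compare_lt_iff_lt.mpr (by exact_mod_cast hm)]
      · rw [if_neg hu, if_neg hu, if_neg hu', if_neg hu']
  · rw [dist_eq, dist_eq] at hmin hd
    rcases eq_or_ne u vmax with rfl | hu <;> rcases eq_or_ne u' vmax with rfl | hu'
    · exact absurd rfl hne
    · -- u = vmax
      rw [if_pos rfl, if_pos rfl, if_neg hu', if_neg hu'] at hmin
      have hδ : n ≤ δ {vmax, u'} := le_trans (by omega) hmin
      rw [Finset.pair_comm] at hδ
      cases u' with
      | vmin => exact le_trans hδ (bd_min δ)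
      | vmax => exact absurd rfl hu'
      | vx => exact le_trans hδ (bd_var δ vx (by decide))
      | vy => exact le_trans hδ (bd_var δ vy (by decide))
      | vz => exact le_trans hδ (bd_var δ vz (by decide))
    · -- u' = vmax
      rw [if_neg hu, if_neg hu, if_pos rfl, if_pos rfl] at hmin
      have hδ : n ≤ δ {u, vmax} := le_trans (by omega) hmin
      cases u with
      | vmin => exact le_trans hδ (bd_min δ)
      | vmax => exact absurd rfl hu
      | vx => exact le_trans hδ (bd_var δ vx (by decide))
      | vy => exact le_trans hδ (bd_var δ vy (by decide))
      | vz => exact le_trans hδ (bd_var δ vz (by decide))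
    · rw [if_neg hu, if_neg hu, if_neg hu', if_neg hu'] at hd
      exact absurd rfl hd

end

/-- Let `α` be the assignment sending `x, y, z` to `0` in both `A_n` and
`A_m` (`n < m`).  Then (1) the map `δ` with `δ({min,max}) = n` and `δ(p) = 0` for all other
pairs is a separator for `⟨{(A_n,α)}, {(A_m,α)}⟩` with `w(δ) = √n`, and (2) every separator
for this pair has weight at least `√n`; hence `δ` is a minimal separator for this pair. -/
theorem linear_order_minimal_separator (n m : ℕ) (hnm : n < m) :
    IsSeparator (fun p => if p = ({SVar.vmin, SVar.vmax} : Finset SVar) then n else 0)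
      {⟨n, fun _ => 0⟩} {⟨m, fun _ => 0⟩} ∧
    sepWeight (fun p => if p = ({SVar.vmin, SVar.vmax} : Finset SVar) then n else 0) =
      Real.sqrt n ∧
    (∀ δ' : Finset SVar → ℕ,
      IsSeparator δ' {⟨n, fun _ => 0⟩} {⟨m, fun _ => 0⟩} → Real.sqrt n ≤ sepWeight δ') ∧
    IsMinimalSeparator (fun p => if p = ({SVar.vmin, SVar.vmax} : Finset SVar) then n else 0)
      {⟨n, fun _ => 0⟩} {⟨m, fun _ => 0⟩} := by
  set δ : Finset SVar → ℕ :=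
    fun p => if p = ({SVar.vmin, SVar.vmax} : Finset SVar) then n else 0 with hδdef
  have hsep : IsSeparator δ {⟨n, fun _ => 0⟩} {⟨m, fun _ => 0⟩} := by
    intro I hI J hJ
    simp only [Set.mem_singleton_iff] at hI hJ
    subst hI; subst hJ
    refine ⟨.vmin, .vmax, by decide, Or.inr ⟨?_, ?_⟩⟩
    · rw [dist_eq, dist_eq, if_neg (by decide : SVar.vmin ≠ SVar.vmax),
        if_neg (by decide : SVar.vmin ≠ SVar.vmax), if_pos rfl, if_pos rfl]
      simp only [hδdef, if_pos rfl]
      omega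
    · rw [dist_eq, dist_eq, if_neg (by decide : SVar.vmin ≠ SVar.vmax),
        if_neg (by decide : SVar.vmin ≠ SVar.vmax), if_pos rfl, if_pos rfl]
      omega
  have hc : centreDist δ = 0 := by
    simp only [centreDist, hδdef,
      if_neg (by decide : ({SVar.vx, SVar.vy} : Finset SVar) ≠ {SVar.vmin, SVar.vmax}),
      if_neg (by decide : ({SVar.vx, SVar.vz} : Finset SVar) ≠ {SVar.vmin, SVar.vmax}),
      if_neg (by decide : ({SVar.vy, SVar.vz} : Finset SVar) ≠ {SVar.vmin, SVar.vmax})]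
    rfl
  have hb : borderDist δ = n := by
    have hsup : ((({SVar.vx, SVar.vy, SVar.vz} : Finset SVar) ×ˢ
        ({SVar.vx, SVar.vy, SVar.vz} : Finset SVar)).sup
        fun p => δ {SVar.vmin, p.1} + δ {p.2, SVar.vmax}) = 0 := by
      refine Nat.le_antisymm (Finset.sup_le ?_) (Nat.zero_le _)
      intro p hp
      fin_cases hp <;> simp only [hδdef] <;>
        rw [if_neg (by decide), if_neg (by decide)]
    rw [borderDist, hsup]
    simp only [hδdef, if_pos rfl]
    omega
  have hw : sepWeight δ = Real.sqrt n := by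
    rw [sepWeight, hc, hb]; norm_num
  have hlow : ∀ δ' : Finset SVar → ℕ,
      IsSeparator δ' {⟨n, fun _ => 0⟩} {⟨m, fun _ => 0⟩} → Real.sqrt n ≤ sepWeight δ' := by
    intro δ' hsep'
    rcases Nat.eq_zero_or_pos n with rfl | hn
    · rw [sepWeight]
      simp only [Nat.cast_zero, Real.sqrt_zero]
      exact Real.sqrt_nonneg _
    · have hb' : (n : ℝ) ≤ (borderDist δ' : ℝ) := by
        exact_mod_cast lower_bound n m hn hnm δ' (hsep' _ rfl _ rfl)
      rw [sepWeight]
      refine Real.sqrt_le_sqrt ?_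
      nlinarith [sq_nonneg ((centreDist δ' : ℝ))]
  exact ⟨hsep, hw, hlow, hsep, fun δ' h => hw ▸ hlow δ' h⟩
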